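/- arXiv:2410.12646 — 5 statements merged into one kernel-verified Lean document; each statement's English description precedes it below -/
import Mathlib

section
/- The pair of functions (φ₁, φ₂) = (1/r, -w'(r)/w(r)) solves the coupled ODE system φ'' + (2w'/w + 1/r)φ' - (1/r²)·A(r)φ = 0 on (0,∞), where A(r) is the matrix with rows (1, 2) and (2, 1 + 2w(r)²r²), and w solves w'' + w'/r - w/r² + (1-w²)w = 0. -/
open Set Filter

/-- The pair `(φ₁, φ₂) = (1/r, -w'/w)` solves the mode-1 homogeneous system. -/
theorem stmt0 (w : ℝ → ℝ)
    (hw_smooth : ContDiffOn ℝ (⊤ : ℕ∞) w (Ioi 0))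
    (hw_pos : ∀ r ∈ Ioi (0:ℝ), 0 < w r ∧ w r < 1)
    (hw_ode : ∀ r ∈ Ioi (0:ℝ),
      deriv (deriv w) r + deriv w r / r - w r / r ^ 2 + (1 - (w r) ^ 2) * w r = 0) :
    let φ₁ : ℝ → ℝ := fun r => 1 / r
    let φ₂ : ℝ → ℝ := fun r => -(deriv w r / w r)
    ∀ r ∈ Ioi (0:ℝ),
      (deriv (deriv φ₁) r + (2 * deriv w r / w r + 1 / r) * deriv φ₁ r
        - (1 / r ^ 2) * (1 * φ₁ r + 2 * φ₂ r) = 0) ∧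
      (deriv (deriv φ₂) r + (2 * deriv w r / w r + 1 / r) * deriv φ₂ r
        - (1 / r ^ 2) * (2 * φ₁ r + (1 + 2 * (w r) ^ 2 * r ^ 2) * φ₂ r) = 0) := by
  intro φ₁ φ₂ r hr
  have hr0 : (0:ℝ) < r := hr
  have hrne : r ≠ 0 := ne_of_gt hr0
  have hopen : Ioi (0:ℝ) ∈ nhds r := isOpen_Ioi.mem_nhds hr
  have hwne : ∀ x ∈ Ioi (0:ℝ), w x ≠ 0 := fun x hx => ne_of_gt (hw_pos x hx).1
  have hWne : w r ≠ 0 := hwne r hr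
  -- differentiability of w and deriv w on Ioi 0
  have hWd : ∀ x ∈ Ioi (0:ℝ), HasDerivAt w (deriv w x) x := by
    intro x hx
    exact ((hw_smooth.contDiffAt (isOpen_Ioi.mem_nhds hx)).differentiableAt
      (by simp)).hasDerivAt
  have hw1 : ContDiffOn ℝ (⊤ : ℕ∞) (deriv w) (Ioi 0) :=
    hw_smooth.deriv_of_isOpen isOpen_Ioi (mod_cast le_top)
  have hPd : ∀ x ∈ Ioi (0:ℝ), HasDerivAt (deriv w) (deriv (deriv w) x) x := by
    intro x hx
    exact ((hw1.contDiffAt (isOpen_Ioi.mem_nhds hx)).differentiableAt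
      (by simp)).hasDerivAt
  -- rearranged ODE
  have hq : ∀ x ∈ Ioi (0:ℝ),
      deriv (deriv w) x = w x / x ^ 2 - deriv w x / x - (1 - w x ^ 2) * w x := by
    intro x hx
    have := hw_ode x hx
    linarith
  constructor
  · -- first equation
    have hdφ₁ : deriv φ₁ = fun x : ℝ => -(x ^ 2)⁻¹ := by
      funext x
      simp [φ₁, one_div, deriv_inv]
    have h2 : HasDerivAt (fun x : ℝ => -(x ^ 2)⁻¹) (2 / r ^ 3) r := by
      have h := ((hasDerivAt_pow 2 r).inv (pow_ne_zero 2 hrne)).neg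
      refine h.congr_deriv ?_
      field_simp
      ring
    have hdd : deriv (deriv φ₁) r = 2 / r ^ 3 := by
      rw [hdφ₁]; exact h2.deriv
    have hd1 : deriv φ₁ r = -(r ^ 2)⁻¹ := by rw [hdφ₁]
    rw [hdd, hd1]
    show 2 / r ^ 3 + (2 * deriv w r / w r + 1 / r) * (-(r ^ 2)⁻¹)
        - (1 / r ^ 2) * (1 * (1 / r) + 2 * (-(deriv w r / w r))) = 0
    field_simp
    ring
  · -- second equation
    set P := deriv w r with hP
    set Q := deriv (deriv w) r with hQdef
    set W := w r with hW
    -- φ₂ derivative on Ioi 0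
    have hφ₂d : ∀ x ∈ Ioi (0:ℝ),
        HasDerivAt φ₂
          (-((deriv (deriv w) x * w x - deriv w x * deriv w x) / w x ^ 2)) x := by
      intro x hx
      exact ((hPd x hx).div (hWd x hx) (hwne x hx)).neg
    have hEq2 : deriv φ₂ =ᶠ[nhds r]
        fun x => -((deriv (deriv w) x * w x - deriv w x * deriv w x) / w x ^ 2) :=
      eventuallyEq_of_mem hopen (fun x hx => (hφ₂d x hx).deriv)
    -- third derivative of w via the ODE
    have hEqK : deriv (deriv w) =ᶠ[nhds r]
        fun x => w x / x ^ 2 - deriv w x / x - (1 - w x ^ 2) * w x :=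
      eventuallyEq_of_mem hopen (fun x hx => hq x hx)
    have hWr : HasDerivAt w P r := hWd r hr
    have hPr : HasDerivAt (deriv w) Q r := hPd r hr
    have t1 := hWr.div (hasDerivAt_pow 2 r) (pow_ne_zero 2 hrne)
    have t2 := hPr.div (hasDerivAt_id' r) hrne
    have t3 := ((hasDerivAt_const r (1:ℝ)).sub (hWr.pow 2)).mul hWr
    have hKr := (t1.sub t2).sub t3
    have hR := hKr.congr_of_eventuallyEq hEqK
    -- derivative of deriv φ₂ at r
    have hG := (((hR.mul hWr).sub (hPr.mul hPr)).div (hWr.pow 2)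
      (pow_ne_zero 2 hWne)).neg
    have hdd := (hG.congr_of_eventuallyEq hEq2).deriv
    have hd2 : deriv φ₂ r = -((Q * W - P * P) / W ^ 2) := (hφ₂d r hr).deriv
    rw [hdd, hd2]
    show _ + (2 * P / W + 1 / r) * (-((Q * W - P * P) / W ^ 2))
        - (1 / r ^ 2) * (2 * (1 / r) + (1 + 2 * W ^ 2 * r ^ 2) * (-(P / W))) = 0
    have hQ : Q = W / r ^ 2 - P / r - (1 - W ^ 2) * W := hq r hr
    rw [hQ]
    have h := hw_ode r hr
    field_simp at h
    simp only [Pi.pow_apply, Pi.sub_apply, Pi.mul_apply, ← hW, ← hP, ← hQdef, hQ]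
    field_simp
    linear_combination
end

section
/- If φ = (φ₁, φ₂) is a C² solution on (0,∞) of the system φ₁'' + (2w'/w + 1/r)φ₁' - (1/r²)(φ₁ + 2φ₂) = 0, φ₂'' + (2w'/w + 1/r)φ₂' - (1/r²)φ₂ - 2w²φ₂ - (2/r²)φ₁ = 0, with φ₁, φ₂ → 0 as r → 0⁺ and φ₁, φ₂ > 0 on some interval (0, δ), then φ₁(r) > 0 and φ₂(r) > 0 for all r ∈ (0,∞). -/
open Set Filter

/-- Auxiliary positivity propagation for a single component. -/
lemma aux_pos (w φ : ℝ → ℝ) (r₀ δ : ℝ) (hr₀ : 0 < r₀) (hδ : 0 < δ)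
    (hw : ContDiffOn ℝ (⊤ : ℕ∞) w (Ioi 0)) (hwpos : ∀ r ∈ Ioi (0:ℝ), 0 < w r)
    (hφ : ContDiffOn ℝ 2 φ (Ioi 0))
    (hE : ∀ r ∈ Ioo (0:ℝ) r₀,
      0 < deriv (deriv φ) r + (2 * deriv w r / w r + 1 / r) * deriv φ r)
    (hlim : Tendsto φ (nhdsWithin 0 (Ioi 0)) (nhds 0))
    (hposδ : ∀ r ∈ Ioo (0:ℝ) δ, 0 < φ r)
    (hposleft : ∀ r ∈ Ioo (0:ℝ) r₀, 0 < φ r) :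
    0 < φ r₀ := by
  set g : ℝ → ℝ := fun r => r * w r ^ 2 * deriv φ r with hg_def
  -- basic differentiability facts
  have hwd : DifferentiableOn ℝ w (Ioi 0) := hw.differentiableOn (by simp)
  have hφd : DifferentiableOn ℝ φ (Ioi 0) := hφ.differentiableOn (by simp)
  have hφ' : ContDiffOn ℝ 1 (deriv φ) (Ioi 0) := by
    have := hφ.deriv_of_isOpen (m := 1) isOpen_Ioi (by norm_num)
    exact this
  have hφ'd : DifferentiableOn ℝ (deriv φ) (Ioi 0) := hφ'.differentiableOn (by simp)
  -- derivative of g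
  have hg : ∀ r ∈ Ioi (0:ℝ), HasDerivAt g
      (r * w r ^ 2 * (deriv (deriv φ) r + (2 * deriv w r / w r + 1 / r) * deriv φ r)) r := by
    intro r hr
    have hrpos : (0:ℝ) < r := hr
    have hwr : 0 < w r := hwpos r hr
    have hwda : HasDerivAt w (deriv w r) r :=
      ((hwd.differentiableAt (isOpen_Ioi.mem_nhds hr)).hasDerivAt)
    have hφ'da : HasDerivAt (deriv φ) (deriv (deriv φ) r) r :=
      ((hφ'd.differentiableAt (isOpen_Ioi.mem_nhds hr)).hasDerivAt)
    have h1 : HasDerivAt (fun r => r * w r ^ 2)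
        (1 * w r ^ 2 + r * (2 * w r ^ 1 * deriv w r)) r :=
      (hasDerivAt_id r).mul (hwda.pow 2)
    have h2 : HasDerivAt g
        ((1 * w r ^ 2 + r * (2 * w r ^ 1 * deriv w r)) * deriv φ r
          + r * w r ^ 2 * deriv (deriv φ) r) r := h1.mul hφ'da
    convert h2 using 1
    field_simp
    ring
  -- continuity of g on Ioi 0
  have hgc : ContinuousOn g (Ioi 0) := by
    intro r hr
    exact ((hg r hr).continuousAt).continuousWithinAt
  by_cases hA : ∃ s ∈ Ioo (0:ℝ) r₀, 0 ≤ g s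
  · -- g nonnegative somewhere: φ' > 0 afterwards, φ increasing up to r₀
    obtain ⟨s, hs, hgs⟩ := hA
    have hgmono : StrictMonoOn g (Icc s r₀) := by
      apply strictMonoOn_of_deriv_pos (convex_Icc s r₀)
      · exact hgc.mono (fun x hx => lt_of_lt_of_le hs.1 hx.1)
      · intro x hx
        rw [interior_Icc] at hx
        have hx0 : x ∈ Ioo (0:ℝ) r₀ := ⟨hs.1.trans hx.1, hx.2⟩
        rw [(hg x hx0.1).deriv]
        exact mul_pos (mul_pos hx0.1 (pow_pos (hwpos x hx0.1) 2)) (hE x hx0)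
    have hφ'pos : ∀ t ∈ Ioo s r₀, 0 < deriv φ t := by
      intro t ht
      have h1 : g s < g t := hgmono ⟨le_rfl, hs.2.le⟩ ⟨ht.1.le, ht.2.le⟩ ht.1
      have hgt : 0 < g t := lt_of_le_of_lt hgs h1
      have htpos : (0:ℝ) < t := hs.1.trans ht.1
      have h2 : 0 < t * w t ^ 2 := mul_pos htpos (pow_pos (hwpos t htpos) 2)
      have hgt' : 0 < t * w t ^ 2 * deriv φ t := hgt
      rcases lt_or_ge 0 (deriv φ t) with h | h
      · exact h
      · exfalso; nlinarith [mul_nonneg h2.le (neg_nonneg.2 h)]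
    have hφmono : StrictMonoOn φ (Icc s r₀) := by
      apply strictMonoOn_of_deriv_pos (convex_Icc s r₀)
      · exact hφd.continuousOn.mono (fun x hx => lt_of_lt_of_le hs.1 hx.1)
      · intro x hx
        rw [interior_Icc] at hx
        exact hφ'pos x hx
    have := hφmono ⟨le_rfl, hs.2.le⟩ ⟨hs.2.le, le_rfl⟩ hs.2
    exact lt_trans (hposleft s hs) this
  · -- g < 0 everywhere on (0, r₀): φ strictly decreasing, contradicting the limit 0 at 0⁺
    push_neg at hA
    exfalso
    have hφ'neg : ∀ t ∈ Ioo (0:ℝ) r₀, deriv φ t < 0 := by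
      intro t ht
      have hgt : t * w t ^ 2 * deriv φ t < 0 := hA t ht
      have h2 : 0 < t * w t ^ 2 := mul_pos ht.1 (pow_pos (hwpos t ht.1) 2)
      rcases lt_or_ge (deriv φ t) 0 with h | h
      · exact h
      · exfalso; nlinarith [mul_nonneg h2.le h]
    set r₁ : ℝ := min δ r₀ / 2 with hr₁def
    have hr₁pos : 0 < r₁ := by positivity
    have hr₁δ : r₁ < δ := by
      have := min_le_left δ r₀; simp only [hr₁def]; linarith [lt_min hδ hr₀]
    have hr₁r₀ : r₁ < r₀ := by
      have := min_le_right δ r₀; simp only [hr₁def]; linarith [lt_min hδ hr₀]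
    have key : ∀ a ∈ Ioo (0:ℝ) r₁, φ r₁ < φ a := by
      intro a ha
      have hanti : StrictAntiOn φ (Icc a r₁) := by
        apply strictAntiOn_of_deriv_neg (convex_Icc a r₁)
        · exact hφd.continuousOn.mono (fun x hx => lt_of_lt_of_le ha.1 hx.1)
        · intro x hx
          rw [interior_Icc] at hx
          exact hφ'neg x ⟨ha.1.trans hx.1, hx.2.trans hr₁r₀⟩
      exact hanti ⟨le_rfl, ha.2.le⟩ ⟨ha.2.le, le_rfl⟩ ha.2
    have hle : φ r₁ ≤ 0 := by
      apply ge_of_tendsto hlim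
      filter_upwards [Ioo_mem_nhdsGT_of_mem (⟨le_rfl, hr₁pos⟩ : (0:ℝ) ∈ Ico 0 r₁)] with a ha
      exact (key a ha).le
    exact absurd (hposδ r₁ ⟨hr₁pos, hr₁δ⟩) (by linarith)

/-- Positivity propagation for the mode-1 homogeneous system: a solution which vanishes at
the origin and is positive near the origin stays positive on all of `(0,∞)`. -/
theorem stmt1 (w φ₁ φ₂ : ℝ → ℝ)
    (hw_smooth : ContDiffOn ℝ (⊤ : ℕ∞) w (Ioi 0))
    (hw_pos : ∀ r ∈ Ioi (0:ℝ), 0 < w r ∧ w r < 1)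
    (hw_incr : ∀ r ∈ Ioi (0:ℝ), 0 < deriv w r)
    (hφ₁ : ContDiffOn ℝ 2 φ₁ (Ioi 0)) (hφ₂ : ContDiffOn ℝ 2 φ₂ (Ioi 0))
    (hode₁ : ∀ r ∈ Ioi (0:ℝ),
      deriv (deriv φ₁) r + (2 * deriv w r / w r + 1 / r) * deriv φ₁ r
        - (1 / r ^ 2) * (φ₁ r + 2 * φ₂ r) = 0)
    (hode₂ : ∀ r ∈ Ioi (0:ℝ),
      deriv (deriv φ₂) r + (2 * deriv w r / w r + 1 / r) * deriv φ₂ r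
        - (1 / r ^ 2) * φ₂ r - 2 * (w r) ^ 2 * φ₂ r - (2 / r ^ 2) * φ₁ r = 0)
    (hlim₁ : Tendsto φ₁ (nhdsWithin 0 (Ioi 0)) (nhds 0))
    (hlim₂ : Tendsto φ₂ (nhdsWithin 0 (Ioi 0)) (nhds 0))
    (hpos : ∃ δ > (0:ℝ), ∀ r ∈ Ioo (0:ℝ) δ, 0 < φ₁ r ∧ 0 < φ₂ r) :
    ∀ r ∈ Ioi (0:ℝ), 0 < φ₁ r ∧ 0 < φ₂ r := by
  obtain ⟨δ, hδ, hposδ⟩ := hpos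
  have hwpos : ∀ r ∈ Ioi (0:ℝ), 0 < w r := fun r hr => (hw_pos r hr).1
  by_contra hcon
  push_neg at hcon
  obtain ⟨R, hR, hRbad⟩ := hcon
  -- failure set
  set F : Set ℝ := {r | r ∈ Ici δ ∧ (φ₁ r ≤ 0 ∨ φ₂ r ≤ 0)} with hF_def
  have hRF : R ∈ F := by
    have hbad : φ₁ R ≤ 0 ∨ φ₂ R ≤ 0 := by
      by_cases h1 : 0 < φ₁ R
      · exact Or.inr (hRbad h1)
      · exact Or.inl (le_of_not_gt h1)
    refine ⟨?_, hbad⟩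
    by_contra h
    rw [mem_Ici, not_le] at h
    rcases hposδ R ⟨hR, h⟩ with ⟨h1, h2⟩
    rcases hbad with h | h <;> linarith
  have hFclosed : IsClosed F := by
    have h1 : ContinuousOn φ₁ (Ici δ) :=
      (hφ₁.continuousOn).mono (fun x hx => lt_of_lt_of_le hδ hx)
    have h2 : ContinuousOn φ₂ (Ici δ) :=
      (hφ₂.continuousOn).mono (fun x hx => lt_of_lt_of_le hδ hx)
    have e : F = (Ici δ ∩ φ₁ ⁻¹' Iic 0) ∪ (Ici δ ∩ φ₂ ⁻¹' Iic 0) := by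
      ext x
      simp only [hF_def, mem_setOf_eq, mem_union, mem_inter_iff, mem_preimage, mem_Iic]
      tauto
    rw [e]
    exact (h1.preimage_isClosed_of_isClosed isClosed_Ici isClosed_Iic).union
      (h2.preimage_isClosed_of_isClosed isClosed_Ici isClosed_Iic)
  have hFbdd : BddBelow F := ⟨δ, fun x hx => hx.1⟩
  set r₀ : ℝ := sInf F with hr₀def
  have hr₀F : r₀ ∈ F := hFclosed.csInf_mem ⟨R, hRF⟩ hFbdd
  have hr₀δ : δ ≤ r₀ := hr₀F.1
  have hr₀pos : (0:ℝ) < r₀ := lt_of_lt_of_le hδ hr₀δ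
  -- both positive on (0, r₀)
  have hposleft : ∀ r ∈ Ioo (0:ℝ) r₀, 0 < φ₁ r ∧ 0 < φ₂ r := by
    intro r hr
    by_cases hrd : r < δ
    · exact hposδ r ⟨hr.1, hrd⟩
    · push_neg at hrd
      by_contra h
      push_neg at h
      have hrF : r ∈ F := by
        refine ⟨hrd, ?_⟩
        by_cases h1 : 0 < φ₁ r
        · exact Or.inr (h h1)
        · exact Or.inl (not_lt.mp h1)
      exact absurd (csInf_le hFbdd hrF) (not_le.mpr hr.2)
  -- apply the auxiliary lemma to each component
  have h₁ : 0 < φ₁ r₀ := by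
    apply aux_pos w φ₁ r₀ δ hr₀pos hδ hw_smooth hwpos hφ₁ _ hlim₁
      (fun r hr => (hposδ r hr).1) (fun r hr => (hposleft r hr).1)
    intro r hr
    have hr' : r ∈ Ioi (0:ℝ) := hr.1
    have := hode₁ r hr'
    have hp := hposleft r hr
    have : deriv (deriv φ₁) r + (2 * deriv w r / w r + 1 / r) * deriv φ₁ r
        = (1 / r ^ 2) * (φ₁ r + 2 * φ₂ r) := by linarith
    rw [this]
    have hr2 : (0:ℝ) < 1 / r ^ 2 := div_pos one_pos (pow_pos hr.1 2)
    nlinarith [hp.1, hp.2]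
  have h₂ : 0 < φ₂ r₀ := by
    apply aux_pos w φ₂ r₀ δ hr₀pos hδ hw_smooth hwpos hφ₂ _ hlim₂
      (fun r hr => (hposδ r hr).2) (fun r hr => (hposleft r hr).2)
    intro r hr
    have hr' : r ∈ Ioi (0:ℝ) := hr.1
    have := hode₂ r hr'
    have hp := hposleft r hr
    have heq : deriv (deriv φ₂) r + (2 * deriv w r / w r + 1 / r) * deriv φ₂ r
        = (1 / r ^ 2) * φ₂ r + 2 * (w r) ^ 2 * φ₂ r + (2 / r ^ 2) * φ₁ r := by linarith
    rw [heq]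
    have hr2 : (0:ℝ) < 1 / r ^ 2 := div_pos one_pos (pow_pos hr.1 2)
    have hr3 : (0:ℝ) < 2 / r ^ 2 := div_pos two_pos (pow_pos hr.1 2)
    have hw2 : (0:ℝ) < (w r) ^ 2 := pow_pos (hwpos r hr') 2
    nlinarith [hp.1, hp.2]
  rcases hr₀F.2 with h | h
  · linarith
  · linarith
end

section
/- If φ = (φ₁, φ₂) is a C² solution on (0,∞) of the mode-1 system φ₁'' + (2w'/w + 1/r)φ₁' - (1/r²)(φ₁ + 2φ₂) = 0, φ₂'' + (2w'/w + 1/r)φ₂' - (1/r²)φ₂ - 2w²φ₂ - (2/r²)φ₁ = 0, with φ₁, φ₂ → 0 as r → ∞ and φ₁, φ₂ > 0 for all sufficiently large r, then φ₁ > 0 and φ₂ > 0 everywhere on (0,∞). -/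
open Set Filter Topology

/-- Auxiliary lemma: a function `u`, `C²` on `(0,∞)`, vanishing at `a > 0`, positive on
`(a,∞)`, tending to `0` at infinity, and satisfying `u'' + (2w'/w + 1/r) u' ≥ 0` on `(a,∞)`
cannot exist. -/
lemma aux_no_zero (w u : ℝ → ℝ) (a : ℝ) (ha : 0 < a)
    (hw : ContDiffOn ℝ (⊤ : ℕ∞) w (Ioi 0))
    (hwpos : ∀ r ∈ Ioi (0:ℝ), 0 < w r)
    (hu : ContDiffOn ℝ 2 u (Ioi 0))
    (hg : ∀ r ∈ Ioi a, 0 ≤ deriv (deriv u) r + (2 * deriv w r / w r + 1 / r) * deriv u r)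
    (hupos : ∀ r ∈ Ioi a, 0 < u r)
    (hua : u a = 0)
    (hlim : Tendsto u atTop (nhds 0)) : False := by
  have hsub : Ici a ⊆ Ioi (0:ℝ) := fun x hx => lt_of_lt_of_le ha hx
  have hsub' : Ioi a ⊆ Ioi (0:ℝ) := fun x hx => lt_trans ha hx
  have hu1 : ContDiffOn ℝ 1 (deriv u) (Ioi 0) :=
    hu.deriv_of_isOpen isOpen_Ioi (by norm_num)
  have hud : ∀ r ∈ Ioi (0:ℝ), HasDerivAt u (deriv u r) r := fun r hr =>
    ((hu.differentiableOn (by norm_num)).differentiableAt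
      (isOpen_Ioi.mem_nhds hr)).hasDerivAt
  have hudd : ∀ r ∈ Ioi (0:ℝ), HasDerivAt (deriv u) (deriv (deriv u) r) r := fun r hr =>
    ((hu1.differentiableOn (by norm_num)).differentiableAt
      (isOpen_Ioi.mem_nhds hr)).hasDerivAt
  have hwd : ∀ r ∈ Ioi (0:ℝ), HasDerivAt w (deriv w r) r := fun r hr =>
    ((hw.differentiableOn (by norm_num)).differentiableAt
      (isOpen_Ioi.mem_nhds hr)).hasDerivAt
  set F : ℝ → ℝ := fun r => r * w r ^ 2 * deriv u r with hFdef
  have hF : ∀ r ∈ Ioi (0:ℝ), HasDerivAt F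
      ((w r ^ 2 + r * (2 * w r * deriv w r)) * deriv u r
        + r * w r ^ 2 * deriv (deriv u) r) r := by
    intro r hr
    have h1 : HasDerivAt (fun r => r * w r ^ 2)
        (1 * w r ^ 2 + r * (2 * w r ^ 1 * deriv w r)) r :=
      (hasDerivAt_id r).mul ((hwd r hr).pow 2)
    have := h1.mul (hudd r hr)
    exact this.congr_deriv (by ring)
  -- the derivative of F is nonnegative on (a,∞)
  have hFnonneg : ∀ r ∈ Ioi a, 0 ≤ deriv F r := by
    intro r hr
    have hr0 : r ∈ Ioi (0:ℝ) := hsub' hr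
    have hrpos : (0:ℝ) < r := hr0
    have hwr : 0 < w r := hwpos r hr0
    rw [(hF r hr0).deriv]
    have hkey : (w r ^ 2 + r * (2 * w r * deriv w r)) * deriv u r
        + r * w r ^ 2 * deriv (deriv u) r
        = r * w r ^ 2 * (deriv (deriv u) r
            + (2 * deriv w r / w r + 1 / r) * deriv u r) := by
      field_simp
      ring
    rw [hkey]
    exact mul_nonneg (by positivity) (hg r hr)
  have hFcont : ContinuousOn F (Ici a) := by
    apply ContinuousOn.mono _ hsub
    exact (continuousOn_id.mul ((hw.continuousOn).pow 2)).mul hu1.continuousOn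
  have hFmono : MonotoneOn F (Ici a) := by
    apply monotoneOn_of_deriv_nonneg (convex_Ici a) hFcont
    · rw [interior_Ici]
      exact fun x hx => (hF x (hsub' hx)).differentiableAt.differentiableWithinAt
    · rw [interior_Ici]; exact hFnonneg
  rcases le_or_gt 0 (deriv u a) with hda | hda
  · -- deriv u a ≥ 0 : F ≥ 0 on [a,∞), so u is nondecreasing, contradicting u → 0
    have hFa : 0 ≤ F a := by
      have hwa : 0 < w a := hwpos a ha
      exact mul_nonneg (by positivity) hda
    have hderiv_nonneg : ∀ r ∈ Ici a, 0 ≤ deriv u r := by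
      intro r hr
      have hFr : 0 ≤ F r := hFa.trans (hFmono self_mem_Ici hr hr)
      have hrpos : (0:ℝ) < r := hsub hr
      have hwr : 0 < w r := hwpos r (hsub hr)
      have hρ : 0 < r * w r ^ 2 := by positivity
      by_contra hneg
      push_neg at hneg
      have : F r < 0 := mul_neg_of_pos_of_neg hρ hneg
      linarith
    have humono : MonotoneOn u (Ici a) := by
      apply monotoneOn_of_deriv_nonneg (convex_Ici a)
        (hu.continuousOn.mono hsub)
      · rw [interior_Ici]
        exact fun x hx => (hud x (hsub' hx)).differentiableAt.differentiableWithinAt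
      · rw [interior_Ici]
        exact fun x hx => hderiv_nonneg x (mem_Ici.mpr (le_of_lt hx))
    have hc : 0 < u (a + 1) := hupos _ (by simp only [mem_Ioi]; linarith)
    have hev : ∀ᶠ r in atTop, u r < u (a + 1) := hlim.eventually_lt_const hc
    obtain ⟨r, hr1, hr2⟩ := (hev.and (eventually_ge_atTop (a + 1))).exists
    have : u (a + 1) ≤ u r := humono (by simp only [mem_Ici]; linarith) (by simp only [mem_Ici]; linarith) hr2
    linarith
  · -- deriv u a < 0 : u is negative just right of a, contradiction
    have hd : HasDerivAt u (deriv u a) a := hud a ha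
    rw [hasDerivAt_iff_tendsto_slope] at hd
    have hev : ∀ᶠ x in 𝓝[≠] a, slope u a x < 0 := hd.eventually_lt_const hda
    have hmono : 𝓝[>] a ≤ 𝓝[≠] a :=
      nhdsWithin_mono a fun x hx => ne_of_gt hx
    have hev' : ∀ᶠ x in 𝓝[>] a, slope u a x < 0 := hev.filter_mono hmono
    obtain ⟨x, hx1, hx2⟩ := (hev'.and self_mem_nhdsWithin).exists
    have hux : 0 < u x := hupos x hx2
    have hslope : slope u a x = u x / (x - a) := by
      rw [slope_def_field, hua, sub_zero]
    rw [hslope] at hx1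
    have : 0 < u x / (x - a) := div_pos hux (by have : a < x := hx2; linarith)
    linarith

/-- Positivity propagation for the mode-1 homogeneous system: a solution which tends to zero
at infinity and is positive for large `r` stays positive on all of `(0,∞)`. -/
theorem stmt2 (w φ₁ φ₂ : ℝ → ℝ)
    (hw_smooth : ContDiffOn ℝ (⊤ : ℕ∞) w (Ioi 0))
    (hw_pos : ∀ r ∈ Ioi (0:ℝ), 0 < w r ∧ w r < 1)
    (hw_incr : ∀ r ∈ Ioi (0:ℝ), 0 < deriv w r)
    (hφ₁ : ContDiffOn ℝ 2 φ₁ (Ioi 0)) (hφ₂ : ContDiffOn ℝ 2 φ₂ (Ioi 0))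
    (hode₁ : ∀ r ∈ Ioi (0:ℝ),
      deriv (deriv φ₁) r + (2 * deriv w r / w r + 1 / r) * deriv φ₁ r
        - (1 / r ^ 2) * (φ₁ r + 2 * φ₂ r) = 0)
    (hode₂ : ∀ r ∈ Ioi (0:ℝ),
      deriv (deriv φ₂) r + (2 * deriv w r / w r + 1 / r) * deriv φ₂ r
        - (1 / r ^ 2) * φ₂ r - 2 * (w r) ^ 2 * φ₂ r - (2 / r ^ 2) * φ₁ r = 0)
    (hlim₁ : Tendsto φ₁ atTop (nhds 0))
    (hlim₂ : Tendsto φ₂ atTop (nhds 0))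
    (hpos : ∃ R : ℝ, ∀ r ≥ R, 0 < φ₁ r ∧ 0 < φ₂ r) :
    ∀ r ∈ Ioi (0:ℝ), 0 < φ₁ r ∧ 0 < φ₂ r := by
  by_contra hcon
  push_neg at hcon
  obtain ⟨r₀, hr₀0, hneg⟩ := hcon
  obtain ⟨R, hR⟩ := hpos
  set R' := max R r₀ with hR'def
  have hr₀R' : r₀ ≤ R' := le_max_right _ _
  have hIccsub : Icc r₀ R' ⊆ Ioi (0:ℝ) := fun x hx => lt_of_lt_of_le hr₀0 hx.1
  set A : Set ℝ := (Icc r₀ R' ∩ φ₁ ⁻¹' (Iic 0)) ∪ (Icc r₀ R' ∩ φ₂ ⁻¹' (Iic 0)) with hAdef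
  have hAclosed : IsClosed A := by
    apply IsClosed.union
    · exact ContinuousOn.preimage_isClosed_of_isClosed
        (hφ₁.continuousOn.mono hIccsub) isClosed_Icc isClosed_Iic
    · exact ContinuousOn.preimage_isClosed_of_isClosed
        (hφ₂.continuousOn.mono hIccsub) isClosed_Icc isClosed_Iic
  have hAsub : A ⊆ Icc r₀ R' := by
    rintro x (⟨hx, _⟩ | ⟨hx, _⟩) <;> exact hx
  have hAcompact : IsCompact A := isCompact_Icc.of_isClosed_subset hAclosed hAsub
  have hr₀A : r₀ ∈ A := by
    have hdisj : φ₁ r₀ ≤ 0 ∨ φ₂ r₀ ≤ 0 := by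
      by_cases h : 0 < φ₁ r₀
      · exact Or.inr (hneg h)
      · exact Or.inl (not_lt.mp h)
    rcases hdisj with h | h
    · exact Or.inl ⟨⟨le_refl _, hr₀R'⟩, h⟩
    · exact Or.inr ⟨⟨le_refl _, hr₀R'⟩, h⟩
  have hAne : A.Nonempty := ⟨r₀, hr₀A⟩
  set s := sSup A with hsdef
  have hsA : s ∈ A := hAcompact.sSup_mem hAne
  have hsIcc : s ∈ Icc r₀ R' := hAsub hsA
  have hspos : 0 < s := lt_of_lt_of_le hr₀0 hsIcc.1
  have hgt : ∀ r ∈ Ioi s, 0 < φ₁ r ∧ 0 < φ₂ r := by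
    intro r hr
    have hrs : s < r := hr
    by_cases hrR : r ≤ R'
    · have hrIcc : r ∈ Icc r₀ R' := ⟨le_trans hsIcc.1 (le_of_lt hrs), hrR⟩
      have hrnA : r ∉ A := fun hrA =>
        absurd (le_csSup hAcompact.bddAbove hrA) (not_le.mpr hrs)
      constructor
      · by_contra h
        exact hrnA (Or.inl ⟨hrIcc, not_lt.mp h⟩)
      · by_contra h
        exact hrnA (Or.inr ⟨hrIcc, not_lt.mp h⟩)
    · exact hR r (le_trans (le_max_left _ _) (le_of_lt (not_le.mp hrR)))
  have hwpos : ∀ r ∈ Ioi (0:ℝ), 0 < w r := fun r hr => (hw_pos r hr).1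
  -- right-continuity gives nonnegativity at s for both components
  have hnonneg : ∀ (φ : ℝ → ℝ), ContDiffOn ℝ 2 φ (Ioi 0) →
      (∀ r ∈ Ioi s, 0 < φ r) → 0 ≤ φ s := by
    intro φ hφ hφpos
    have hc : ContinuousWithinAt φ (Ioi 0) s :=
      hφ.continuousOn.continuousWithinAt (mem_Ioi.mpr hspos)
    have hc' : Tendsto φ (𝓝[>] s) (𝓝 (φ s)) :=
      hc.tendsto.mono_left (nhdsWithin_mono s fun x hx => lt_trans hspos hx)
    exact ge_of_tendsto hc'
      (eventually_mem_nhdsWithin.mono fun x hx => le_of_lt (hφpos x hx))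
  have h1nn : 0 ≤ φ₁ s := hnonneg φ₁ hφ₁ fun r hr => (hgt r hr).1
  have h2nn : 0 ≤ φ₂ s := hnonneg φ₂ hφ₂ fun r hr => (hgt r hr).2
  rcases hsA with ⟨_, h1⟩ | ⟨_, h2⟩
  · -- φ₁ s = 0
    have hzero : φ₁ s = 0 := le_antisymm h1 h1nn
    exact aux_no_zero w φ₁ s hspos hw_smooth hwpos hφ₁
      (by
        intro r hr
        have hr0 : r ∈ Ioi (0:ℝ) := lt_trans hspos hr
        have hode := hode₁ r hr0
        have h1p : 0 < φ₁ r := (hgt r hr).1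
        have h2p : 0 < φ₂ r := (hgt r hr).2
        have hrpos : (0:ℝ) < r := hr0
        have hinv : 0 < 1 / r ^ 2 := by positivity
        nlinarith)
      (fun r hr => (hgt r hr).1) hzero hlim₁
  · -- φ₂ s = 0
    have hzero : φ₂ s = 0 := le_antisymm h2 h2nn
    exact aux_no_zero w φ₂ s hspos hw_smooth hwpos hφ₂
      (by
        intro r hr
        have hr0 : r ∈ Ioi (0:ℝ) := lt_trans hspos hr
        have hode := hode₂ r hr0
        have h1p : 0 < φ₁ r := (hgt r hr).1
        have h2p : 0 < φ₂ r := (hgt r hr).2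
        have hrpos : (0:ℝ) < r := hr0
        have hwr : 0 < w r := hwpos r hr0
        have hinv : 0 < 1 / r ^ 2 := by positivity
        have hinv2 : 0 < 2 / r ^ 2 := by positivity
        nlinarith)
      (fun r hr => (hgt r hr).2) hzero hlim₂
end

section
/- Let ψ : annulus {ρ ≤ |x| ≤ R} ⊂ ℝ² → ℝ be a C² solution of Δψ + (2w'(r)/w(r))∂_r ψ = h with ψ = 0 on both boundary circles, where w is smooth positive increasing, and suppose ψ has Fourier expansion in θ containing only a single mode k with |k| ≥ 1, i.e. ψ(r,θ) = u(r)e^{ikθ}. Then u satisfies u'' + (2w'/w + 1/r)u' - (k²/r²)u = ĥ_k(r), and |u(r)| ≤ (C/k²) sup_{ρ≤s≤R} |s² ĥ_k(s)| for a universal constant C. -/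
open Set Complex Filter Topology

lemma my_max_principle {ρ R : ℝ} (hρR : ρ < R) (g g' g'' a c : ℝ → ℝ)
    (hgc : ContinuousOn g (Icc ρ R))
    (hg1 : ∀ r ∈ Ioo ρ R, HasDerivAt g (g' r) r)
    (hg2 : ∀ r ∈ Ioo ρ R, HasDerivAt g' (g'' r) r)
    (hc : ∀ r ∈ Ioo ρ R, 0 < c r)
    (hineq : ∀ r ∈ Ioo ρ R, 0 ≤ g'' r + a r * g' r - c r * g r)
    (hbl : g ρ ≤ 0) (hbr : g R ≤ 0) :
    ∀ r ∈ Icc ρ R, g r ≤ 0 := by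
  obtain ⟨r₀, hr₀, hmax⟩ := isCompact_Icc.exists_isMaxOn (nonempty_Icc.2 hρR.le) hgc
  have key : g r₀ ≤ 0 := by
    by_contra h
    push_neg at h
    have hne1 : r₀ ≠ ρ := fun e => absurd (e ▸ h) (not_lt.2 hbl)
    have hne2 : r₀ ≠ R := fun e => absurd (e ▸ h) (not_lt.2 hbr)
    have hio : r₀ ∈ Ioo ρ R := ⟨lt_of_le_of_ne hr₀.1 (Ne.symm hne1), lt_of_le_of_ne hr₀.2 hne2⟩
    have hloc : IsLocalMax g r₀ := hmax.isLocalMax (Icc_mem_nhds hio.1 hio.2)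
    have hg'0 : g' r₀ = 0 := hloc.hasDerivAt_eq_zero (hg1 r₀ hio)
    have hg''pos : 0 < g'' r₀ := by
      have h1 := hineq r₀ hio
      have h2 := hc r₀ hio
      rw [hg'0, mul_zero] at h1
      nlinarith [mul_pos h2 h]
    have hslope : Tendsto (slope g' r₀) (𝓝[≠] r₀) (𝓝 (g'' r₀)) :=
      hasDerivAt_iff_tendsto_slope.1 (hg2 r₀ hio)
    have hev : ∀ᶠ t in 𝓝[≠] r₀, 0 < slope g' r₀ t :=
      hslope.eventually (eventually_gt_nhds hg''pos)
    have hev2 : ∀ᶠ t in 𝓝[≠] r₀, t ∈ Ioo ρ R :=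
      eventually_nhdsWithin_of_eventually_nhds (isOpen_Ioo.eventually_mem hio)
    have hmem : {t : ℝ | 0 < slope g' r₀ t ∧ t ∈ Ioo ρ R} ∈ 𝓝[>] r₀ := by
      apply nhdsWithin_mono r₀ (fun t (ht : t ∈ Ioi r₀) => (show r₀ < t from ht).ne')
      exact hev.and hev2
    rw [mem_nhdsGT_iff_exists_Ioo_subset] at hmem
    obtain ⟨b, hb, hsub⟩ := hmem
    set b' := (r₀ + min b R) / 2 with hb'
    have hrb' : r₀ < b' := by
      have : r₀ < min b R := lt_min hb hio.2
      simp only [hb']; linarith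
    have hb'b : b' < b := by
      have h1 : r₀ < min b R := lt_min hb hio.2
      have := min_le_left b R
      simp only [hb']; linarith
    have hb'R : b' < R := by
      have h1 : r₀ < min b R := lt_min hb hio.2
      have := min_le_right b R
      simp only [hb']; linarith
    have hsub2 : Ioo r₀ b' ⊆ {t : ℝ | 0 < slope g' r₀ t ∧ t ∈ Ioo ρ R} :=
      fun t ht => hsub ⟨ht.1, ht.2.trans hb'b⟩
    have hmono : StrictMonoOn g (Icc r₀ b') := by
      apply strictMonoOn_of_deriv_pos (convex_Icc _ _)
      · exact hgc.mono (Icc_subset_Icc hr₀.1 hb'R.le)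
      · intro x hx
        rw [interior_Icc] at hx
        obtain ⟨hs, hxm⟩ := hsub2 hx
        rw [(hg1 x hxm).deriv]
        have hx0 : 0 < x - r₀ := sub_pos.2 hx.1
        rw [slope_def_field, hg'0, sub_zero] at hs
        have := mul_pos hs hx0
        calc (0:ℝ) < (g' x / (x - r₀)) * (x - r₀) := this
          _ = g' x := div_mul_cancel₀ _ (ne_of_gt hx0)
    have hlt : g r₀ < g b' :=
      hmono ⟨le_refl r₀, hrb'.le⟩ ⟨hrb'.le, le_refl b'⟩ hrb'
    exact absurd (hmax ⟨hr₀.1.trans hrb'.le, hb'R.le⟩) (not_le.2 hlt)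
  intro r hr
  exact le_trans (hmax hr) key

lemma my_dexp (k : ℤ) (a : ℂ) (θ : ℝ) :
    HasDerivAt (fun t : ℝ => a * Complex.exp ((k:ℂ) * t * Complex.I))
      (a * ((k:ℂ) * Complex.I) * Complex.exp ((k:ℂ) * θ * Complex.I)) θ := by
  have h0 : HasDerivAt (fun t : ℝ => (t : ℂ)) 1 θ := by
    simpa using (hasDerivAt_id θ).ofReal_comp
  have h1 : HasDerivAt (fun t : ℝ => (k:ℂ) * t * Complex.I) ((k:ℂ) * Complex.I) θ := by
    simpa using (h0.const_mul ((k:ℂ))).mul_const Complex.I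
  have h2 := (h1.cexp).const_mul a
  refine h2.congr_deriv ?_
  ring

/-- Single-Fourier-mode barrier estimate on an annulus: if `ψ(r,θ) = u(r)e^{ikθ}` solves
`Δψ + (2w'/w)∂_r ψ = h` with `h(r,θ) = ĥ(r)e^{ikθ}` and vanishes on both boundary
circles, then `u` solves the mode-`k` ODE and `|u| ≤ (C/k²) sup |s²ĥ(s)|`. -/
theorem stmt11 :
    ∃ C > (0:ℝ), ∀ (k : ℤ), 1 ≤ |k| →
      ∀ (w : ℝ → ℝ) (u hhat : ℝ → ℂ) (ρ R : ℝ), 0 < ρ → ρ < R →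
      ContDiffOn ℝ (⊤ : ℕ∞) w (Ioi 0) →
      (∀ r ∈ Ioi (0:ℝ), 0 < w r) →
      (∀ r ∈ Ioi (0:ℝ), 0 ≤ deriv w r) →
      ContDiffOn ℝ 2 u (Icc ρ R) →
      (∀ r ∈ Ioo ρ R, ∀ θ : ℝ,
        deriv (deriv (fun s : ℝ => u s * Complex.exp ((k:ℂ) * θ * Complex.I))) r
        + (1 / (r:ℂ)) * deriv (fun s : ℝ => u s * Complex.exp ((k:ℂ) * θ * Complex.I)) r
        + (1 / (r:ℂ) ^ 2) *
            deriv (deriv (fun t : ℝ => u r * Complex.exp ((k:ℂ) * t * Complex.I))) θ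
        + (2 * Complex.ofReal (deriv w r) / Complex.ofReal (w r)) *
            deriv (fun s : ℝ => u s * Complex.exp ((k:ℂ) * θ * Complex.I)) r
        = hhat r * Complex.exp ((k:ℂ) * θ * Complex.I)) →
      u ρ = 0 → u R = 0 →
      ∀ M : ℝ, (∀ s ∈ Icc ρ R, ‖(s:ℂ) ^ 2 * hhat s‖ ≤ M) →
      (∀ r ∈ Ioo ρ R,
        deriv (deriv u) r + (2 * Complex.ofReal (deriv w r) / Complex.ofReal (w r) + 1 / (r:ℂ)) * deriv u r
          - ((k:ℂ) ^ 2 / (r:ℂ) ^ 2) * u r = hhat r) ∧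
      (∀ r ∈ Icc ρ R, ‖u r‖ ≤ C / (k:ℝ) ^ 2 * M) := by
  refine ⟨1, one_pos, ?_⟩
  intro k hk w u hhat ρ R hρ hρR hw hwpos hw' hu hpde huρ huR M hM
  -- Part 1 : the ODE
  have hODE : ∀ r ∈ Ioo ρ R,
      deriv (deriv u) r + (2 * Complex.ofReal (deriv w r) / Complex.ofReal (w r) + 1 / (r:ℂ)) * deriv u r
        - ((k:ℂ) ^ 2 / (r:ℂ) ^ 2) * u r = hhat r := by
    intro r hr
    have E := hpde r hr 0
    have hder1 : deriv (fun t : ℝ => u r * Complex.exp ((k:ℂ) * t * Complex.I))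
        = fun θ : ℝ => u r * ((k:ℂ) * Complex.I) * Complex.exp ((k:ℂ) * θ * Complex.I) :=
      funext fun θ => (my_dexp k (u r) θ).deriv
    have hder2 : deriv (deriv (fun t : ℝ => u r * Complex.exp ((k:ℂ) * t * Complex.I))) 0
        = -((k:ℂ)^2 * u r) := by
      rw [hder1, (my_dexp k (u r * ((k:ℂ) * Complex.I)) 0).deriv]
      have h0 : ((k:ℂ) * ((0:ℝ):ℂ) * Complex.I) = 0 := by simp
      rw [h0, Complex.exp_zero, mul_one]
      linear_combination (u r * (k:ℂ)^2) * Complex.I_sq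
    simp only [Complex.ofReal_zero, mul_zero, zero_mul, Complex.exp_zero, mul_one] at E
    rw [hder2] at E
    linear_combination E
  refine ⟨hODE, ?_⟩
  -- Part 2 : the bound
  set K : ℝ := (k:ℝ)^2 with hKdef
  have hK1 : (1:ℝ) ≤ K := by
    have h1 : (1:ℝ) ≤ |(k:ℝ)| := by
      rw [← Int.cast_abs]; exact_mod_cast hk
    nlinarith [_root_.sq_abs ((k:ℝ))]
  have hKpos : (0:ℝ) < K := lt_of_lt_of_le one_pos hK1
  have hM0 : 0 ≤ M := le_trans (norm_nonneg _) (hM ρ ⟨le_refl ρ, hρR.le⟩)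
  -- derivative facts
  have huI : ContDiffOn ℝ 2 u (Ioo ρ R) := hu.mono Ioo_subset_Icc_self
  have hd1 : ∀ r ∈ Ioo ρ R, HasDerivAt u (deriv u r) r := fun r hr =>
    ((huI.differentiableOn (by norm_num)).differentiableAt (isOpen_Ioo.mem_nhds hr)).hasDerivAt
  have hu' : ContDiffOn ℝ 1 (deriv u) (Ioo ρ R) :=
    huI.deriv_of_isOpen isOpen_Ioo (by norm_num)
  have hd2 : ∀ r ∈ Ioo ρ R, HasDerivAt (deriv u) (deriv (deriv u) r) r := fun r hr =>
    ((hu'.differentiableOn one_ne_zero).differentiableAt (isOpen_Ioo.mem_nhds hr)).hasDerivAt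
  -- a pointwise bound on hhat
  have hhat_bd : ∀ r ∈ Ioo ρ R, ‖hhat r‖ ≤ M / r^2 := by
    intro r hr
    have hr0 : (0:ℝ) < r := hρ.trans hr.1
    have := hM r ⟨hr.1.le, hr.2.le⟩
    rw [norm_mul, norm_pow, Complex.norm_real, Real.norm_eq_abs, abs_of_pos hr0] at this
    rw [le_div_iff₀ (by positivity)]
    linarith [this]
  -- For any unit modulus c, bound the real part of c * u
  have main : ∀ c : ℂ, ‖c‖ = 1 → ∀ r ∈ Icc ρ R, (c * u r).re ≤ M / K := by
    intro c hc
    have hv1 : ∀ r ∈ Ioo ρ R, HasDerivAt (fun s => (c * u s).re) ((c * deriv u r).re) r := by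
      intro r hr
      have := Complex.reCLM.hasFDerivAt.comp_hasDerivAt r ((hd1 r hr).const_mul c)
      exact this
    have hv2 : ∀ r ∈ Ioo ρ R, HasDerivAt (fun s => (c * deriv u s).re) ((c * deriv (deriv u) r).re) r := by
      intro r hr
      have := Complex.reCLM.hasFDerivAt.comp_hasDerivAt r ((hd2 r hr).const_mul c)
      exact this
    have hcont : ContinuousOn (fun s => (c * u s).re - M / K) (Icc ρ R) :=
      ((Complex.continuous_re.comp_continuousOn (continuousOn_const.mul hu.continuousOn)).sub
        continuousOn_const)
    have happ := my_max_principle hρR (fun s => (c * u s).re - M / K)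
      (fun s => (c * deriv u s).re) (fun s => (c * deriv (deriv u) s).re)
      (fun s => 2 * deriv w s / w s + 1 / s) (fun s => K / s^2)
      hcont
      (fun r hr => ((hv1 r hr).sub_const _))
      hv2
      (fun r hr => div_pos hKpos (pow_pos (hρ.trans hr.1) 2))
      ?_ (by simp [huρ]; positivity) (by simp [huR]; positivity)
    · intro r hr
      have := happ r hr
      linarith [this]
    · intro r hr
      have hr0 : (0:ℝ) < r := hρ.trans hr.1
      have hode := hODE r hr
      have hco : (2 * Complex.ofReal (deriv w r) / Complex.ofReal (w r) + 1 / (r:ℂ))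
          = Complex.ofReal (2 * deriv w r / w r + 1 / r) := by
        push_cast; ring
      have hk2 : ((k:ℂ)^2 / (r:ℂ)^2) = Complex.ofReal (K / r^2) := by
        rw [hKdef]; push_cast; ring
      have hcx : c * deriv (deriv u) r + Complex.ofReal (2 * deriv w r / w r + 1 / r) * (c * deriv u r)
          - Complex.ofReal (K / r^2) * (c * u r) = c * hhat r := by
        rw [← hco, ← hk2]; linear_combination c * hode
      have hre_eq : (c * deriv (deriv u) r).re + (2 * deriv w r / w r + 1 / r) * (c * deriv u r).re
          - (K / r^2) * (c * u r).re = (c * hhat r).re := by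
        have h := congrArg Complex.re hcx
        simp only [Complex.add_re, Complex.sub_re, Complex.mul_re, Complex.ofReal_re,
          Complex.ofReal_im, zero_mul, sub_zero] at h ⊢
        linarith [h]
      have habs : |(c * hhat r).re| ≤ M / r^2 := by
        calc |(c * hhat r).re| ≤ ‖c * hhat r‖ := Complex.abs_re_le_norm _
          _ = ‖hhat r‖ := by rw [norm_mul, hc, one_mul]
          _ ≤ M / r^2 := hhat_bd r hr
      have hKr : (K / r^2) * (M / K) = M / r^2 := by
        field_simp
      have h1 : -(M / r^2) ≤ (c * hhat r).re := neg_le_of_abs_le habs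
      nlinarith [hre_eq, hKr, h1]
  -- conclude
  intro r₀ hr₀
  by_cases h : u r₀ = 0
  · rw [h, norm_zero]
    positivity
  · have hne : ‖u r₀‖ ≠ 0 := norm_ne_zero_iff.mpr h
    set c : ℂ := (starRingEnd ℂ) (u r₀) / ((‖u r₀‖ : ℝ) : ℂ) with hc_def
    have hQ : ((‖u r₀‖ : ℝ) : ℂ) ≠ 0 := by
      simpa using hne
    have hcabs : ‖c‖ = 1 := by
      rw [hc_def, norm_div, Complex.norm_conj, Complex.norm_real, Real.norm_eq_abs,
        _root_.abs_of_nonneg (norm_nonneg (u r₀)), div_self hne]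
    have hmul : c * u r₀ = ((‖u r₀‖ : ℝ) : ℂ) := by
      rw [hc_def, div_mul_eq_mul_div, mul_comm, Complex.mul_conj, Complex.normSq_eq_norm_sq]
      rw [div_eq_iff hQ]; push_cast; ring
    have := main c hcabs r₀ hr₀
    rw [hmul, Complex.ofReal_re] at this
    calc ‖u r₀‖ ≤ M / K := this
      _ = 1 / (k:ℝ)^2 * M := by rw [hKdef]; ring
end

section
/- Let k ≥ 2 and let (φ₁, φ₂) be a C² solution on (0,∞) of φ₁'' + (2w'/w + 1/r)φ₁' - (k²/r²)φ₁ - (2k/r²)φ₂ = 0, φ₂'' + (2w'/w + 1/r)φ₂' - (k²/r²)φ₂ - 2w²φ₂ - (2k/r²)φ₁ = 0, with φ₁, φ₂ → 0 as r → 0⁺ and φ₁, φ₂ > 0 near 0. Then φ₁ > 0 and φ₂ > 0 on all of (0,∞). -/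
open Set Filter

/-- Second derivative test: at an interior local maximum of a `C²` function the
second derivative is nonpositive. -/
lemma secondDeriv_nonpos_of_isLocalMax {f : ℝ → ℝ} {s : Set ℝ} (hs : IsOpen s)
    (hf : ContDiffOn ℝ 2 f s) {ρ : ℝ} (hρ : ρ ∈ s) (hmax : IsLocalMax f ρ) :
    deriv (deriv f) ρ ≤ 0 := by
  by_contra hcon
  push_neg at hcon
  have hf' : ContDiffOn ℝ 1 (deriv f) s := by
    have := hf.deriv_of_isOpen hs (m := 1) (by norm_num)
    exact this
  have hf'' : ContinuousOn (deriv (deriv f)) s :=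
    hf'.continuousOn_deriv_of_isOpen hs le_rfl
  have hca : ContinuousAt (deriv (deriv f)) ρ :=
    hf''.continuousAt (hs.mem_nhds hρ)
  have hev : {x | 0 < deriv (deriv f) x} ∈ nhds ρ :=
    hca.preimage_mem_nhds (Ioi_mem_nhds hcon)
  have hall : {x | x ∈ s ∧ 0 < deriv (deriv f) x ∧ f x ≤ f ρ} ∈ nhds ρ := by
    filter_upwards [hs.mem_nhds hρ, hev, hmax] with x h1 h2 h3
    exact ⟨h1, h2, h3⟩
  obtain ⟨ε, hε, hball⟩ := Metric.mem_nhds_iff.1 hall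
  rw [Real.ball_eq_Ioo] at hball
  set I := Ioo (ρ - ε) (ρ + ε) with hI
  have hρI : ρ ∈ I := by constructor <;> · simp [hI]; linarith
  -- deriv f is strictly monotone on I
  have hmono' : StrictMonoOn (deriv f) I := by
    apply strictMonoOn_of_deriv_pos (convex_Ioo _ _)
    · exact (hf'.continuousOn).mono fun x hx => (hball hx).1
    · intro x hx
      rw [interior_Ioo] at hx
      exact (hball hx).2.1
  have hderiv0 : deriv f ρ = 0 := hmax.deriv_eq_zero
  -- f is strictly monotone on [ρ, ρ+ε)
  have hmono : StrictMonoOn f (Ico ρ (ρ + ε)) := by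
    apply strictMonoOn_of_deriv_pos (convex_Ico _ _)
    · apply hf.continuousOn.mono
      intro x hx
      refine (hball ?_).1
      exact ⟨by linarith [hx.1, hε], hx.2⟩
    · intro x hx
      rw [interior_Ico] at hx
      have hxI : x ∈ I := ⟨by linarith [hx.1], hx.2⟩
      have := hmono' hρI hxI hx.1
      rwa [hderiv0] at this
  have hx : ρ + ε / 2 ∈ Ico ρ (ρ + ε) := ⟨by linarith, by linarith⟩
  have hlt : f ρ < f (ρ + ε / 2) := hmono ⟨le_refl _, by linarith⟩ hx (by linarith)
  have hle : f (ρ + ε / 2) ≤ f ρ := (hball ⟨by linarith, by linarith⟩).2.2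
  linarith

/-- No first zero: if `f` is `C²`, tends to `0` at `0⁺`, is positive somewhere in `(0,r₀)`,
nonpositive at `r₀`, and the ODE forces strict convexity at interior critical points with
positive value, we get a contradiction. -/
lemma no_interior_max {f : ℝ → ℝ} {r₀ : ℝ} (hr₀ : 0 < r₀)
    (hf : ContDiffOn ℝ 2 f (Ioi 0))
    (hlim : Tendsto f (nhdsWithin 0 (Ioi 0)) (nhds 0))
    {s : ℝ} (hs : s ∈ Ioo 0 r₀) (hfs : 0 < f s)
    (hend : f r₀ ≤ 0)
    (hkey : ∀ ρ ∈ Ioo 0 r₀, deriv f ρ = 0 → 0 < f ρ → 0 < deriv (deriv f) ρ) :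
    False := by
  -- find a ∈ (0,s) with f a < f s
  have hev : ∀ᶠ r in nhdsWithin 0 (Ioi 0), f r < f s := by
    have := hlim.eventually (eventually_lt_nhds hfs)
    exact this
  have hIoo : Ioo (0:ℝ) s ∈ nhdsWithin 0 (Ioi 0) := Ioo_mem_nhdsGT_of_mem ⟨le_refl _, hs.1⟩
  obtain ⟨a, hfa, ha⟩ := (hev.and (eventually_of_mem hIoo fun x hx => hx)).exists
  obtain ⟨ha0, has⟩ := ha
  -- max on [a, r₀]
  have hIcc : Icc a r₀ ⊆ Ioi 0 := fun x hx => lt_of_lt_of_le ha0 hx.1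
  obtain ⟨ρ, hρmem, hρmax⟩ := (isCompact_Icc (a := a) (b := r₀)).exists_isMaxOn
    (nonempty_Icc.2 (by linarith [hs.2])) (hf.continuousOn.mono hIcc)
  have hsmem : s ∈ Icc a r₀ := ⟨le_of_lt has, le_of_lt hs.2⟩
  have hρs : f s ≤ f ρ := hρmax hsmem
  have hρa : ρ ≠ a := fun h => by rw [h] at hρs; linarith
  have hρr : ρ ≠ r₀ := fun h => by rw [h] at hρs; linarith
  have hρIoo : ρ ∈ Ioo a r₀ := ⟨lt_of_le_of_ne hρmem.1 (Ne.symm hρa), lt_of_le_of_ne hρmem.2 hρr⟩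
  have hloc : IsLocalMax f ρ := hρmax.isLocalMax (Icc_mem_nhds hρIoo.1 hρIoo.2)
  have h1 : 0 < deriv (deriv f) ρ :=
    hkey ρ ⟨lt_trans ha0 hρIoo.1, hρIoo.2⟩ hloc.deriv_eq_zero (lt_of_lt_of_le hfs hρs)
  have h2 : deriv (deriv f) ρ ≤ 0 :=
    secondDeriv_nonpos_of_isLocalMax isOpen_Ioi hf (lt_trans ha0 hρIoo.1) hloc
  linarith


/-- Positivity propagation for the mode-`k` (`k ≥ 2`) homogeneous system near the origin. -/
theorem stmt13 (k : ℕ) (hk : 2 ≤ k) (w φ₁ φ₂ : ℝ → ℝ)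
    (hw_smooth : ContDiffOn ℝ (⊤ : ℕ∞) w (Ioi 0))
    (hw_pos : ∀ r ∈ Ioi (0:ℝ), 0 < w r ∧ w r < 1)
    (hw_incr : ∀ r ∈ Ioi (0:ℝ), 0 < deriv w r)
    (hφ₁ : ContDiffOn ℝ 2 φ₁ (Ioi 0)) (hφ₂ : ContDiffOn ℝ 2 φ₂ (Ioi 0))
    (hode₁ : ∀ r ∈ Ioi (0:ℝ),
      deriv (deriv φ₁) r + (2 * deriv w r / w r + 1 / r) * deriv φ₁ r
        - ((k:ℝ) ^ 2 / r ^ 2) * φ₁ r - (2 * k / r ^ 2) * φ₂ r = 0)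
    (hode₂ : ∀ r ∈ Ioi (0:ℝ),
      deriv (deriv φ₂) r + (2 * deriv w r / w r + 1 / r) * deriv φ₂ r
        - ((k:ℝ) ^ 2 / r ^ 2) * φ₂ r - 2 * (w r) ^ 2 * φ₂ r - (2 * k / r ^ 2) * φ₁ r = 0)
    (hlim₁ : Tendsto φ₁ (nhdsWithin 0 (Ioi 0)) (nhds 0))
    (hlim₂ : Tendsto φ₂ (nhdsWithin 0 (Ioi 0)) (nhds 0))
    (hpos : ∃ δ > (0:ℝ), ∀ r ∈ Ioo (0:ℝ) δ, 0 < φ₁ r ∧ 0 < φ₂ r) :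
    ∀ r ∈ Ioi (0:ℝ), 0 < φ₁ r ∧ 0 < φ₂ r := by
  obtain ⟨δ, hδ, hδpos⟩ := hpos
  by_contra hcon
  push_neg at hcon
  obtain ⟨r₁, hr₁, hbad⟩ := hcon
  -- the set of "bad" radii
  set S : Set ℝ := {r | 0 < r ∧ (φ₁ r ≤ 0 ∨ φ₂ r ≤ 0)} with hS
  have hr₁S : r₁ ∈ S := by
    refine ⟨hr₁, ?_⟩
    by_cases h1 : 0 < φ₁ r₁
    · exact Or.inr (le_of_not_gt fun h2 => (hbad h1).not_gt h2)
    · exact Or.inl (le_of_not_gt h1)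
  have hne : S.Nonempty := ⟨r₁, hr₁S⟩
  have hbdd : BddBelow S := ⟨0, fun x hx => le_of_lt hx.1⟩
  set r₀ := sInf S with hr₀def
  have hlbδ : ∀ x ∈ S, δ ≤ x := by
    intro x hx
    by_contra hlt
    push_neg at hlt
    obtain ⟨h1, h2⟩ := hδpos x ⟨hx.1, hlt⟩
    rcases hx.2 with h | h <;> linarith
  have hδr₀ : δ ≤ r₀ := le_csInf hne hlbδ
  have hr₀pos : 0 < r₀ := lt_of_lt_of_le hδ hδr₀
  -- interior positivity
  have hint : ∀ ρ ∈ Ioo (0:ℝ) r₀, 0 < φ₁ ρ ∧ 0 < φ₂ ρ := by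
    intro ρ hρ
    by_contra hbadρ
    push_neg at hbadρ
    have hρS : ρ ∈ S := by
      refine ⟨hρ.1, ?_⟩
      by_cases h1 : 0 < φ₁ ρ
      · exact Or.inr (hbadρ h1)
      · exact Or.inl (le_of_not_gt h1)
    exact absurd (csInf_le hbdd hρS) (not_le.2 hρ.2)
  -- at r₀ one of the components is ≤ 0
  have hmin0 : min (φ₁ r₀) (φ₂ r₀) ≤ 0 := by
    have hclos : r₀ ∈ closure S := csInf_mem_closure hne hbdd
    obtain ⟨u, huS, hulim⟩ := mem_closure_iff_seq_limit.1 hclos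
    have hca : ContinuousAt (fun r => min (φ₁ r) (φ₂ r)) r₀ := by
      have h1 : ContinuousAt φ₁ r₀ :=
        (hφ₁.continuousOn.continuousAt (isOpen_Ioi.mem_nhds hr₀pos))
      have h2 : ContinuousAt φ₂ r₀ :=
        (hφ₂.continuousOn.continuousAt (isOpen_Ioi.mem_nhds hr₀pos))
      exact h1.min h2
    have htend : Tendsto (fun n => min (φ₁ (u n)) (φ₂ (u n))) atTop
        (nhds (min (φ₁ r₀) (φ₂ r₀))) := hca.tendsto.comp hulim
    refine le_of_tendsto htend (Eventually.of_forall fun n => ?_)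
    rcases (huS n).2 with h | h
    · exact le_trans (min_le_left _ _) h
    · exact le_trans (min_le_right _ _) h
  -- a point where φ₁, φ₂ are positive, inside (0, r₀)
  have hshalf : min δ r₀ / 2 ∈ Ioo (0:ℝ) r₀ := by
    constructor
    · have : 0 < min δ r₀ := lt_min hδ hr₀pos
      linarith
    · have h1 : min δ r₀ ≤ r₀ := min_le_right _ _
      linarith [hr₀pos]
  have hsδ : min δ r₀ / 2 < δ := by
    have h1 : min δ r₀ ≤ δ := min_le_left _ _
    linarith
  obtain ⟨hp1, hp2⟩ := hδpos _ ⟨hshalf.1, hsδ⟩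
  rcases le_or_gt (φ₁ r₀) 0 with hend | hpos1
  · -- φ₁ hits zero first
    refine no_interior_max hr₀pos hφ₁ hlim₁ hshalf hp1 hend ?_
    intro ρ hρ hd0 hfρ
    have hρI : ρ ∈ Ioi (0:ℝ) := hρ.1
    have hode := hode₁ ρ hρI
    rw [hd0, mul_zero] at hode
    have hφ₂ρ : 0 < φ₂ ρ := (hint ρ hρ).2
    have hk0 : (0:ℝ) < (k:ℝ) := by exact_mod_cast lt_of_lt_of_le (by norm_num) hk
    have hρ2 : (0:ℝ) < ρ ^ 2 := pow_pos hρ.1 2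
    have h1 : 0 < ((k:ℝ) ^ 2 / ρ ^ 2) * φ₁ ρ := by positivity
    have h2 : 0 < (2 * (k:ℝ) / ρ ^ 2) * φ₂ ρ := by positivity
    linarith
  · -- then φ₂ hits zero first
    have hend : φ₂ r₀ ≤ 0 := by
      rcases min_le_iff.1 hmin0 with h | h
      · linarith
      · exact h
    refine no_interior_max hr₀pos hφ₂ hlim₂ hshalf hp2 hend ?_
    intro ρ hρ hd0 hfρ
    have hρI : ρ ∈ Ioi (0:ℝ) := hρ.1
    have hode := hode₂ ρ hρI
    rw [hd0, mul_zero] at hode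
    have hφ₁ρ : 0 < φ₁ ρ := (hint ρ hρ).1
    have hwρ : 0 < w ρ := (hw_pos ρ hρI).1
    have hk0 : (0:ℝ) < (k:ℝ) := by exact_mod_cast lt_of_lt_of_le (by norm_num) hk
    have hρ2 : (0:ℝ) < ρ ^ 2 := pow_pos hρ.1 2
    have h1 : 0 < ((k:ℝ) ^ 2 / ρ ^ 2) * φ₂ ρ := by positivity
    have h2 : 0 < 2 * (w ρ) ^ 2 * φ₂ ρ := by positivity
    have h3 : 0 < (2 * (k:ℝ) / ρ ^ 2) * φ₁ ρ := by positivity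
    linarith
end
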